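/- Let Ω be a finite set, E a proper nonempty subset of Ω, u: Ω → ℝ with u non-constant on Ω∖E, and β ∈ ℝ with β < u(ω) for all ω. With φ and ≼_φ defined as in the unacceptable-risk example, ≼_φ does not satisfy interpolation: there exist distributions A ≼_φ B ≼_φ C such that no α ∈ [0,1] makes αA+(1−α)C ≼_φ-equivalent to B. -/

import Mathlib

/-! Let `e ∈ E` and `x, y ∉ E` with `u x < u y`. Take `B = δ_x`, `C = δ_y` and let `A` put a small
mass `a > 0` on `e` and the rest on `x`. A mixture `αA + (1-α)C` with `α > 0` charges `E` with mass
`αa ∈ (0, a]`, so its value is `β e^{αa}`, which stays below `u x = φ(B)` once `a` is small since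
`β < u x`; at `α = 0` the value is `u y ≠ u x`. So nothing in the segment is equivalent to `B`. -/

open Finset

/-- `p` is a probability mass function on the finite type `X`. -/
def IsDist {X : Type*} [Fintype X] (p : X → ℝ) : Prop :=
  (∀ x, 0 ≤ p x) ∧ ∑ x, p x = 1

/-- Pointwise convex combination of two (distributions viewed as) functions. -/
def mix {X : Type*} (α : ℝ) (A B : X → ℝ) : X → ℝ :=
  fun x => α * A x + (1 - α) * B x

open Classical in
/-- The unacceptable-risk performance function. -/
noncomputable def riskPhi {Ω : Type*} [Fintype Ω] (E : Finset Ω) (u : Ω → ℝ) (β : ℝ)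
    (A : Ω → ℝ) : ℝ :=
  if (∑ ω ∈ E, A ω) = 0 then ∑ ω, u ω * A ω else β * Real.exp (∑ ω ∈ E, A ω)

section Distributions

variable {X : Type*} [Fintype X]

theorem isDist_pi_single [DecidableEq X] (x : X) : IsDist (Pi.single x (1 : ℝ)) :=
  ⟨fun y => by by_cases h : y = x <;> simp [h], by simp⟩

theorem IsDist.mix {α : ℝ} (h0 : 0 ≤ α) (h1 : α ≤ 1) {A B : X → ℝ} (hA : IsDist A)
    (hB : IsDist B) : IsDist (mix α A B) := by
  refine ⟨fun x => ?_, ?_⟩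
  · exact add_nonneg (mul_nonneg h0 (hA.1 x)) (mul_nonneg (sub_nonneg.2 h1) (hB.1 x))
  · simp [_root_.mix, sum_add_distrib, ← mul_sum, hA.2, hB.2]

end Distributions

theorem sum_mix {X : Type*} (s : Finset X) (α : ℝ) (A B : X → ℝ) :
    ∑ x ∈ s, mix α A B x = α * ∑ x ∈ s, A x + (1 - α) * ∑ x ∈ s, B x := by
  simp [mix, sum_add_distrib, mul_sum]

theorem mix_zero {X : Type*} (A B : X → ℝ) : mix 0 A B = B := by
  funext x
  simp [mix]

theorem mix_one {X : Type*} (A B : X → ℝ) : mix 1 A B = A := by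
  funext x
  simp [mix]

section RiskPhi

variable {Ω : Type*} [Fintype Ω] (E : Finset Ω) (u : Ω → ℝ) (β : ℝ)

theorem riskPhi_of_sum_ne_zero {A : Ω → ℝ} (h : ∑ ω ∈ E, A ω ≠ 0) :
    riskPhi E u β A = β * Real.exp (∑ ω ∈ E, A ω) := by
  rw [riskPhi, if_neg h]

theorem riskPhi_pi_single_of_notMem [DecidableEq Ω] {x : Ω} (hx : x ∉ E) :
    riskPhi E u β (Pi.single x 1) = u x := by
  rw [riskPhi, if_pos (by simp [hx])]
  simp [Pi.single_apply]

end RiskPhi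

theorem exists_mul_exp_lt_of_lt {β c : ℝ} (h : β < c) :
    ∃ a ∈ Set.Ioc (0 : ℝ) 1, ∀ t ∈ Set.Ioc 0 a, β * Real.exp t < c := by
  have hlim : Filter.Tendsto (fun t => β * Real.exp t) (nhds 0) (nhds β) := by
    simpa using (Real.continuous_exp.const_mul β).tendsto 0
  obtain ⟨a, ha, hsub⟩ := mem_nhdsGT_iff_exists_Ioc_subset.mp
    (eventually_nhdsWithin_of_eventually_nhds (hlim.eventually_lt_const h))
  exact ⟨min a 1, ⟨lt_min ha one_pos, min_le_right a 1⟩,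
    fun t ht => hsub ⟨ht.1, ht.2.trans (min_le_left a 1)⟩⟩

theorem riskPhi_no_interpolation_of_lt {Ω : Type*} [Fintype Ω] [DecidableEq Ω]
    {E : Finset Ω} {u : Ω → ℝ} {β : ℝ} {e x y : Ω} (he : e ∈ E) (hx : x ∉ E) (hy : y ∉ E)
    (hxy : u x < u y) (hβ : β < u x) :
    ∃ A B C : Ω → ℝ, IsDist A ∧ IsDist B ∧ IsDist C ∧
      riskPhi E u β A ≤ riskPhi E u β B ∧ riskPhi E u β B ≤ riskPhi E u β C ∧
      ∀ α : ℝ, 0 ≤ α → α ≤ 1 → ¬ riskPhi E u β (mix α A C) = riskPhi E u β B := by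
  obtain ⟨a, ⟨ha0, ha1⟩, hsmall⟩ := exists_mul_exp_lt_of_lt hβ
  set A := mix a (Pi.single e 1) (Pi.single x 1)
  have hmass (α : ℝ) : ∑ ω ∈ E, mix α A (Pi.single y 1) ω = α * a := by
    simp [A, sum_mix, he, hx, hy]
  have hφ (α : ℝ) (hα0 : 0 < α) (hα1 : α ≤ 1) :
      riskPhi E u β (mix α A (Pi.single y 1)) < u x := by
    rw [riskPhi_of_sum_ne_zero E u β (by rw [hmass]; positivity), hmass]
    exact hsmall _ ⟨by positivity, mul_le_of_le_one_left ha0.le hα1⟩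
  refine ⟨A, Pi.single x 1, Pi.single y 1,
    (isDist_pi_single e).mix ha0.le ha1 (isDist_pi_single x), isDist_pi_single x,
    isDist_pi_single y, ?_, ?_, ?_⟩
  · rw [riskPhi_pi_single_of_notMem E u β hx, ← mix_one A (Pi.single y 1)]
    exact (hφ 1 one_pos le_rfl).le
  · rw [riskPhi_pi_single_of_notMem E u β hx, riskPhi_pi_single_of_notMem E u β hy]
    exact hxy.le
  · intro α hα0 hα1
    rw [riskPhi_pi_single_of_notMem E u β hx]
    rcases hα0.eq_or_lt with rfl | hα0
    · rw [mix_zero, riskPhi_pi_single_of_notMem E u β hy]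
      exact hxy.ne'
    · exact (hφ α hα0 hα1).ne

theorem riskPhi_no_interpolation_general {Ω : Type*} [Fintype Ω]
    (E : Finset Ω) (hE : E.Nonempty)
    (u : Ω → ℝ)
    (hu : ∃ ω₁ ∉ E, ∃ ω₂ ∉ E, u ω₁ ≠ u ω₂)
    (β : ℝ) (hβ : ∀ ω, β < u ω) :
    ∃ A B C : Ω → ℝ, IsDist A ∧ IsDist B ∧ IsDist C ∧
      riskPhi E u β A ≤ riskPhi E u β B ∧ riskPhi E u β B ≤ riskPhi E u β C ∧
      ∀ α : ℝ, 0 ≤ α → α ≤ 1 → ¬ riskPhi E u β (mix α A C) = riskPhi E u β B := by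
  classical
  obtain ⟨e, he⟩ := hE
  obtain ⟨x, hx, y, hy, hxy⟩ := hu
  rcases hxy.lt_or_gt with hlt | hgt
  · exact riskPhi_no_interpolation_of_lt he hx hy hlt (hβ x)
  · exact riskPhi_no_interpolation_of_lt he hy hx hgt (hβ y)

/-- `≼_φ` does not satisfy interpolation. -/
theorem riskPhi_no_interpolation {Ω : Type*} [Fintype Ω]
    (E : Finset Ω) (hE : E.Nonempty) (hEproper : E ≠ Finset.univ)
    (u : Ω → ℝ)
    (hu : ∃ ω₁ ∉ E, ∃ ω₂ ∉ E, u ω₁ ≠ u ω₂)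
    (β : ℝ) (hβ : ∀ ω, β < u ω) :
    ∃ A B C : Ω → ℝ, IsDist A ∧ IsDist B ∧ IsDist C ∧
      riskPhi E u β A ≤ riskPhi E u β B ∧ riskPhi E u β B ≤ riskPhi E u β C ∧
      ∀ α : ℝ, 0 ≤ α → α ≤ 1 → ¬ riskPhi E u β (mix α A C) = riskPhi E u β B :=
  riskPhi_no_interpolation_general E hE u hu β hβ
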